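/- arXiv:2501.13101 — 2 statements merged into one kernel-verified Lean document; each statement's English description precedes it below -/
import Mathlib

section
/- Let D be a locally unbiased probability distribution over linear maps on 2^n×2^n complex matrices. Then for all P, Q ∈ P_n with supp(P) ≠ supp(Q): E_{C∼D}[C(P) ⊗ C(Q)] = 0. Consequently, for every Hermitian observable O = Σ_{P∈P_n} a_P P: E_{C∼D}[C(O) ⊗ C(O)] = Σ_{A⊆{1,…,n}} E_{C∼D}[(Σ_{P: supp(P)=A} a_P C(P)) ⊗ (Σ_{P: supp(P)=A} a_P C(P))]. -/
open scoped Kronecker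
open Matrix
open scoped ComplexOrder

noncomputable section

abbrev QMat := Matrix (Fin 2) (Fin 2) ℂ

abbrev NMat (n : ℕ) := Matrix (Fin n → Fin 2) (Fin n → Fin 2) ℂ

/-- The four single-qubit Pauli matrices `I, X, Y, Z`. -/
def pauli : Fin 4 → QMat :=
  ![1, !![0, 1; 1, 0], !![0, -Complex.I; Complex.I, 0], !![1, 0; 0, -1]]

/-- The non-identity Paulis `X, Y, Z`. -/
def pauliXYZ (i : Fin 3) : QMat := pauli i.succ

/-- The `n`-qubit Pauli string indexed by `s : Fin n → Fin 4`. -/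
def pauliString {n : ℕ} (s : Fin n → Fin 4) : NMat n :=
  Matrix.of fun i j => ∏ k, pauli (s k) (i k) (j k)

/-- Support of a Pauli string. -/
def psupp {n : ℕ} (s : Fin n → Fin 4) : Finset (Fin n) :=
  Finset.univ.filter fun k => s k ≠ 0

/-- The observable with real Pauli coefficients `a`. -/
def obsOf {n : ℕ} (a : (Fin n → Fin 4) → ℝ) : NMat n :=
  ∑ s : Fin n → Fin 4, (a s : ℂ) • pauliString s

/-- Normalized Frobenius norm squared, `‖M‖_F² = Tr[Mᴴ M]/dim`. -/
def frobSq {m : Type*} [Fintype m] (M : Matrix m m ℂ) : ℝ :=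
  (Matrix.trace (Mᴴ * M)).re / (Fintype.card m : ℝ)

def IsUnitary {m : Type*} [Fintype m] [DecidableEq m] (U : Matrix m m ℂ) : Prop :=
  U * Uᴴ = 1 ∧ Uᴴ * U = 1

/-- Hilbert–Schmidt adjoint of a (linear) map on matrices:
`Φ†(A) i j = conj (Tr[Aᴴ Φ(E_{ij})])`. -/
def hsAdj {m : Type*} [Fintype m] [DecidableEq m]
    (Φ : Matrix m m ℂ → Matrix m m ℂ) (A : Matrix m m ℂ) : Matrix m m ℂ :=
  Matrix.of fun i j => (starRingEnd ℂ) (Matrix.trace (Aᴴ * Φ (Matrix.single i j 1)))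

/-- Pauli transfer matrix entry of a single-qubit map. -/
def ptm (Φ : QMat → QMat) (a b : Fin 4) : ℂ :=
  Matrix.trace (pauli a * Φ (pauli b)) / 2

/-- Tensor product `Φ 0 ⊗ Φ 1 ⊗ ⋯ ⊗ Φ (n-1)` of single-qubit (linear) maps,
defined via the Pauli transfer matrices. -/
def tensorMap {n : ℕ} (Φ : Fin n → QMat → QMat) (M : NMat n) : NMat n :=
  ∑ s : Fin n → Fin 4, ∑ t : Fin n → Fin 4,
    ((∏ k, ptm (Φ k) (s k) (t k)) * (Matrix.trace (pauliString t * M) / ((2 : ℂ) ^ n))) •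
      pauliString s

/-- `n`-fold tensor power `Φ^{⊗n}` of a single-qubit (linear) map. -/
def tensorPow (n : ℕ) (Φ : QMat → QMat) : NMat n → NMat n :=
  tensorMap fun _ => Φ

/-- Tensor product of `n` single-qubit matrices. -/
def qprod {n : ℕ} (V : Fin n → QMat) : NMat n :=
  Matrix.of fun i j => ∏ k, V k (i k) (j k)

/-- The single-qubit normal-form map `N'` with parameters `(D, t)`:
`N'(I) = I + Σ t_i σ_i` and `N'(σ_i) = D_i σ_i`. -/
def normalForm (D t : Fin 3 → ℝ) (M : QMat) : QMat :=
  (Matrix.trace M / 2) • (1 + ∑ i, (t i : ℂ) • pauliXYZ i) +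
    ∑ i, ((D i : ℂ) * (Matrix.trace (pauliXYZ i * M) / 2)) • pauliXYZ i

/-- `Υ(D,t) = max_{‖a‖₂=1} Σ_i a_i² D_i² + (Σ_i a_i t_i)²`. -/
def Upsilon (D t : Fin 3 → ℝ) : ℝ :=
  sSup { r : ℝ | ∃ a : Fin 3 → ℝ, (∑ i, a i ^ 2) = 1 ∧
    r = (∑ i, a i ^ 2 * D i ^ 2) + (∑ i, a i * t i) ^ 2 }

/-- Choi matrix of a single-qubit map. -/
def choi (Φ : QMat → QMat) : Matrix (Fin 2 × Fin 2) (Fin 2 × Fin 2) ℂ :=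
  Matrix.of fun p q => Φ (Matrix.single p.1 q.1 1) p.2 q.2

/-- A single-qubit quantum channel: linear, trace preserving, completely positive. -/
structure IsChannel (Φ : QMat → QMat) : Prop where
  linear : IsLinearMap ℂ Φ
  tracePreserving : ∀ M, Matrix.trace (Φ M) = Matrix.trace M
  completelyPositive : (choi Φ).PosSemidef

/-- Unitary 1-design (finitely supported distribution). -/
def IsOneDesign {ι : Type*} [Fintype ι] (w : ι → ℝ) (W : ι → QMat) : Prop :=
  ∀ M : QMat, ∑ i, (w i : ℂ) • (W i * M * (W i)ᴴ) = (Matrix.trace M / 2) • (1 : QMat)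

/-- The swap (flip) operator on two qubits. -/
def swapOp : Matrix (Fin 2 × Fin 2) (Fin 2 × Fin 2) ℂ :=
  Matrix.of fun p q => if p.1 = q.2 ∧ p.2 = q.1 then 1 else 0

/-- Unitary 2-design: the twirl of any `M` matches the Haar value
`c_I • 1 + c_F • F` (closed form of the Haar average on `U(2)`). -/
def IsTwoDesign {ι : Type*} [Fintype ι] (w : ι → ℝ) (W : ι → QMat) : Prop :=
  ∀ M : Matrix (Fin 2 × Fin 2) (Fin 2 × Fin 2) ℂ,
    ∑ i, (w i : ℂ) • ((W i ⊗ₖ W i) * M * (W i ⊗ₖ W i)ᴴ) =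
      ((Matrix.trace M - Matrix.trace (swapOp * M) / 2) / 3) •
          (1 : Matrix (Fin 2 × Fin 2) (Fin 2 × Fin 2) ℂ) +
        ((Matrix.trace (swapOp * M) - Matrix.trace M / 2) / 3) • swapOp

/-- `η`-approximate scrambler (finitely supported distribution over `U(2)`). -/
def IsApproxScrambler {ι : Type*} [Fintype ι] (η : ℝ) (w : ι → ℝ) (U : ι → QMat) : Prop :=
  (∀ a b : Fin 4, a ≠ b →
      ∑ i, (w i : ℂ) • (((U i)ᴴ * pauli a * U i) ⊗ₖ ((U i)ᴴ * pauli b * U i)) = 0) ∧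
    ∀ a b : Fin 3,
      ∑ i, w i * ((Matrix.trace (pauliXYZ a * U i * pauliXYZ b * (U i)ᴴ)).re / 2) ^ 2 ≤
        (1 + 2 * η) / 3

/-- Locally unbiased distribution over linear maps on `n`-qubit matrices. -/
def LocallyUnbiased (n : ℕ) {ι : Type*} [Fintype ι] (w : ι → ℝ)
    (C : ι → NMat n → NMat n) : Prop :=
  ∃ (m : ℕ) (v : Fin n → Fin m → ℝ) (W : Fin n → Fin m → QMat),
    (∀ j k, 0 ≤ v j k) ∧ (∀ j, ∑ k, v j k = 1) ∧ (∀ j k, IsUnitary (W j k)) ∧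
      (∀ j, IsOneDesign (v j) (W j)) ∧
      ∀ A B : NMat n,
        ∑ i, (w i : ℂ) • (C i A ⊗ₖ C i B) =
          ∑ i, ∑ f : Fin n → Fin m,
            ((w i * ∏ j, v j (f j) : ℝ) : ℂ) •
              (C i (qprod (fun j => W j (f j)) * A * (qprod fun j => W j (f j))ᴴ) ⊗ₖ
                C i (qprod (fun j => W j (f j)) * B * (qprod fun j => W j (f j))ᴴ))

/-- Pauli-invariant distribution over linear maps on `n`-qubit matrices. -/
def PauliInvariant (n : ℕ) {ι : Type*} [Fintype ι] (w : ι → ℝ)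
    (C : ι → NMat n → NMat n) : Prop :=
  ∀ A B : NMat n,
    ∑ i, (w i : ℂ) • (C i A ⊗ₖ C i B) =
      ((4 : ℂ) ^ n)⁻¹ • ∑ r : Fin n → Fin 4, ∑ i, (w i : ℂ) •
        (C i (pauliString r * A * pauliString r) ⊗ₖ C i (pauliString r * B * pauliString r))

/-- Fourier coefficient `Φ_γ(C) = Π_j 2^{-n} Tr[P_j C_j(P_{j-1})]` of a Pauli path. -/
def pathCoeff {n L : ℕ} (Cs : Fin L → NMat n → NMat n)
    (γ : Fin (L + 1) → Fin n → Fin 4) : ℂ :=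
  ∏ j : Fin L,
    (Matrix.trace (pauliString (γ j.succ) * Cs j (pauliString (γ j.castSucc))) / ((2 : ℂ) ^ n))

/-- Path weight `|γ| = Σ_{j=1}^L |P_j|`. -/
def pathWeight {n L : ℕ} (γ : Fin (L + 1) → Fin n → Fin 4) : ℕ :=
  ∑ j : Fin L, (psupp (γ j.succ)).card

/-- The (non-physical) map `Ñ_p` with `Ñ_p(I) = (N(I) - pI)/(1-p)` and
`Ñ_p(σ) = N(σ)/(1-p)` for `σ ∈ {X,Y,Z}`. -/
def tildeMap (N : QMat → QMat) (p : ℝ) (M : QMat) : QMat :=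
  (Matrix.trace M / 2) • (((1 : ℂ) - (p : ℂ))⁻¹ • (N 1 - (p : ℂ) • (1 : QMat))) +
    ∑ i : Fin 3, (Matrix.trace (pauliXYZ i * M) / 2) • (((1 : ℂ) - (p : ℂ))⁻¹ • N (pauliXYZ i))

/-- The layers of an `L`-layered noisy circuit: `C_j(ρ) = N^{⊗n}(U_j ρ U_j†)` for `j < L`,
and the last layer is followed by the single-qubit layer `V`. -/
def layerMaps {n L : ℕ} (Nm : QMat → QMat) (U : Fin L → NMat n) (Vt : NMat n)
    (j : Fin L) (ρ : NMat n) : NMat n :=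
  if j.val = L - 1 then Vt * tensorPow n Nm (U j * ρ * (U j)ᴴ) * Vtᴴ
  else tensorPow n Nm (U j * ρ * (U j)ᴴ)

/-- Composition `C_L ∘ ⋯ ∘ C_1` of the layers. -/
def circuitOf {n L : ℕ} (lm : Fin L → NMat n → NMat n) (ρ : NMat n) : NMat n :=
  (List.finRange L).foldl (fun σ j => lm j σ) ρ

/-- Operator (spectral) norm of a matrix, as the `ℓ²→ℓ²` operator norm. -/
def specNorm {m : Type*} [Fintype m] (M : Matrix m m ℂ) : ℝ :=
  Real.sqrt (sSup { r : ℝ | ∃ v : m → ℂ,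
    (∑ x, Complex.normSq (v x)) = 1 ∧ r = ∑ x, Complex.normSq (M.mulVec v x) })

/-- Trace norm `‖M‖₁ = Tr √(Mᴴ M)` (sum of singular values). -/
def traceNorm {m : Type*} [Fintype m] [DecidableEq m] (M : Matrix m m ℂ) : ℝ :=
  (Matrix.trace
    ((Matrix.posSemidef_conjTranspose_mul_self M).1.eigenvectorUnitary.1 *
      Matrix.diagonal (((↑) : ℝ → ℂ) ∘ (Real.sqrt ·) ∘ (Matrix.posSemidef_conjTranspose_mul_self M).1.eigenvalues) *
      (star (Matrix.posSemidef_conjTranspose_mul_self M).1.eigenvectorUnitary : Matrix m m ℂ))).re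

/-!
If `supp P ≠ supp Q`, some qubit `k` carries the identity in one string and a Pauli `σ ≠ I` in
the other. Local unbiasedness lets us twirl qubit `k` alone by its 1-design `W`: the identity
factor is unchanged, while the average of `W σ W†` vanishes since `σ` is traceless, so by
linearity of `C` and bilinearity of `⊗` every such cross term averages to zero. Expanding
`E[C(O) ⊗ C(O)]` bilinearly and discarding the cross terms between different supports gives the
decomposition over supports.
-/

open Finset

theorem Fintype.sum_prod_smul_eq_zero_of_sum_update {R M ι α : Type*} [CommSemiring R]
    [AddCommMonoid M] [Module R M] [Fintype ι] [DecidableEq ι] [Fintype α]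
    (v : ι → α → R) (Φ : (ι → α) → M) (k : ι)
    (h : ∀ f, ∑ x, v k x • Φ (Function.update f k x) = 0) :
    ∑ f : ι → α, (∏ j, v j (f j)) • Φ f = 0 := by
  rcases isEmpty_or_nonempty α with hα | ⟨⟨x₀⟩⟩
  · have : IsEmpty (ι → α) := ⟨fun f => hα.false (f k)⟩
    simp
  set e := (Equiv.funSplitAt k α).symm
  rw [← e.sum_comp, Fintype.sum_prod_type, Finset.sum_comm]
  refine Finset.sum_eq_zero fun g _ => ?_
  set f₀ := e (x₀, g)
  have he : ∀ x, e (x, g) = Function.update f₀ k x := by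
    intro x; ext j
    by_cases hj : j = k
    · subst hj; simp [e]
    · simp [e, f₀, hj]
  set r := ∏ j ∈ univ.erase k, v j (f₀ j)
  have hw : ∀ x, ∏ j, v j (e (x, g) j) = v k x * r := by
    intro x
    rw [he, ← Finset.mul_prod_erase _ _ (mem_univ k), Function.update_self]
    congr 1
    exact Finset.prod_congr rfl fun j hj => by rw [Function.update_of_ne (ne_of_mem_erase hj)]
  calc ∑ x, (∏ j, v j (e (x, g) j)) • Φ (e (x, g))
      = r • ∑ x, v k x • Φ (Function.update f₀ k x) := by
        rw [Finset.smul_sum]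
        exact Finset.sum_congr rfl fun x _ => by rw [hw, he, mul_comm, mul_smul]
    _ = 0 := by rw [h, smul_zero]

theorem LinearMap.map_sum_sum_eq_sum_fiberwise {R M P κ γ : Type*} [CommSemiring R]
    [AddCommMonoid M] [AddCommMonoid P] [Module R M] [Module R P] [Fintype κ] [Fintype γ]
    [DecidableEq γ] (B : M →ₗ[R] M →ₗ[R] P) (x : κ → M) (g : κ → γ)
    (h : ∀ s t, g s ≠ g t → B (x s) (x t) = 0) :
    B (∑ s, x s) (∑ t, x t) =
      ∑ c, B (∑ s ∈ univ.filter (g · = c), x s) (∑ t ∈ univ.filter (g · = c), x t) := by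
  calc B (∑ s, x s) (∑ t, x t) = ∑ s, ∑ t ∈ univ.filter (g · = g s), B (x s) (x t) := by
        rw [B.map_sum₂]
        refine sum_congr rfl fun s _ => ?_
        rw [map_sum]
        refine (sum_subset (subset_univ _) fun t _ ht => h s t ?_).symm
        simpa [eq_comm] using ht
    _ = ∑ c, ∑ s ∈ univ.filter (g · = c), ∑ t ∈ univ.filter (g · = c), B (x s) (x t) := by
        rw [← sum_fiberwise univ g]
        refine sum_congr rfl fun c _ => sum_congr rfl fun s hs => ?_
        rw [(mem_filter.1 hs).2]
    _ = _ := by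
        simp only [map_sum, LinearMap.coe_sum, Finset.sum_apply]
        exact sum_congr rfl fun c _ => sum_comm

section QubitProducts

variable {n : ℕ}

theorem qprod_mul (V U : Fin n → QMat) : qprod V * qprod U = qprod fun k => V k * U k := by
  ext i j
  simp only [qprod, Matrix.mul_apply, Matrix.of_apply]
  conv_rhs => rw [Finset.prod_univ_sum]
  simp [← Finset.prod_mul_distrib, Fintype.piFinset_univ]

theorem qprod_conjTranspose (V : Fin n → QMat) : (qprod V)ᴴ = qprod fun k => (V k)ᴴ := by
  ext i j
  simp [qprod, Matrix.conjTranspose_apply, star_prod]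

theorem qprod_mul_pauliString_mul_conjTranspose (V : Fin n → QMat) (s : Fin n → Fin 4) :
    qprod V * pauliString s * (qprod V)ᴴ = qprod fun k => V k * pauli (s k) * (V k)ᴴ := by
  rw [show pauliString s = qprod fun k => pauli (s k) from rfl, qprod_conjTranspose, qprod_mul,
    qprod_mul]

theorem qprod_update_apply [DecidableEq (Fin n)] (V : Fin n → QMat) (k : Fin n) (M : QMat)
    (i j : Fin n → Fin 2) :
    qprod (Function.update V k M) i j = M (i k) (j k) * ∏ l ∈ univ.erase k, V l (i l) (j l) := by
  rw [qprod, Matrix.of_apply, ← Finset.mul_prod_erase _ _ (mem_univ k), Function.update_self]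
  congr 1
  exact Finset.prod_congr rfl fun l hl => by rw [Function.update_of_ne (ne_of_mem_erase hl)]

variable (n) in
def qprodMultilinear : MultilinearMap ℂ (fun _ : Fin n => QMat) (NMat n) where
  toFun := qprod
  map_update_add' V k M N := by ext i j; simp [qprod_update_apply, add_mul]
  map_update_smul' V k c M := by ext i j; simp [qprod_update_apply, mul_assoc]

theorem qprod_update_eq_toLinearMap (V : Fin n → QMat) (k : Fin n) (M : QMat) :
    qprod (Function.update V k M) = (qprodMultilinear n).toLinearMap V k M := rfl

end QubitProducts

theorem trace_pauli_eq_zero {a : Fin 4} (h : a ≠ 0) : Matrix.trace (pauli a) = 0 := by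
  fin_cases a
  · exact absurd rfl h
  all_goals simp [pauli, Matrix.trace_fin_two]

theorem IsOneDesign.sum_conj_eq_zero {ι : Type*} [Fintype ι] {w : ι → ℝ} {W : ι → QMat}
    (hW : IsOneDesign w W) {M : QMat} (hM : M.trace = 0) :
    ∑ i, (w i : ℂ) • (W i * M * (W i)ᴴ) = 0 := by
  rw [hW M, hM, zero_div, zero_smul]

theorem sum_prod_smul_conj_pauliString_eq_zero {n : ℕ} {P : Type*} [AddCommMonoid P]
    [Module ℂ P] (β : NMat n →ₗ[ℂ] NMat n →ₗ[ℂ] P) {m : ℕ} (v : Fin n → Fin m → ℝ)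
    (W : Fin n → Fin m → QMat) (hW : ∀ j x, IsUnitary (W j x))
    (hv : ∀ j, IsOneDesign (v j) (W j)) {s s' : Fin n → Fin 4} {k : Fin n} (hs : s k = 0)
    (hs' : s' k ≠ 0) :
    ∑ f : Fin n → Fin m, ((∏ j, v j (f j) : ℝ) : ℂ) •
      β (qprod (fun j => W j (f j)) * pauliString s * (qprod fun j => W j (f j))ᴴ)
        (qprod (fun j => W j (f j)) * pauliString s' * (qprod fun j => W j (f j))ᴴ) = 0 := by
  push_cast
  refine Fintype.sum_prod_smul_eq_zero_of_sum_update (fun j x => (v j x : ℂ)) _ k fun f => ?_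
  have hconj : ∀ t x, qprod (fun j => W j (Function.update f k x j)) * pauliString t *
      (qprod fun j => W j (Function.update f k x j))ᴴ =
        (qprodMultilinear n).toLinearMap (fun j => W j (f j) * pauli (t j) * (W j (f j))ᴴ) k
          (W k x * pauli (t k) * (W k x)ᴴ) := by
    intro t x
    rw [qprod_mul_pauliString_mul_conjTranspose, ← qprod_update_eq_toLinearMap]
    congr 1
    funext j
    exact Function.apply_update (fun j y => W j y * pauli (t j) * (W j y)ᴴ) f k x j
  have hone : ∀ x, W k x * pauli (s k) * (W k x)ᴴ = 1 := fun x => by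
    rw [hs, show pauli 0 = 1 from rfl, mul_one]
    exact (hW k x).1
  have htwirl : ∑ x, (v k x : ℂ) • (W k x * pauli (s' k) * (W k x)ᴴ) = 0 :=
    (hv k).sum_conj_eq_zero (trace_pauli_eq_zero hs')
  simp_rw [hconj, hone, ← map_smul, ← map_sum, htwirl, map_zero]

theorem exists_xor_eq_zero_of_psupp_ne {n : ℕ} {s s' : Fin n → Fin 4} (h : psupp s ≠ psupp s') :
    ∃ k, Xor (s k = 0) (s' k = 0) := by
  contrapose! h
  ext k
  simpa [psupp] using not_congr ((not_xor _ _).1 (h k))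

theorem LocallyUnbiased.sum_smul_kronecker_pauliString_eq_zero {n : ℕ} {ι : Type*} [Fintype ι]
    {w : ι → ℝ} {C : ι → NMat n →ₗ[ℂ] NMat n} (hLU : LocallyUnbiased n w fun i => C i)
    {s s' : Fin n → Fin 4} (h : psupp s ≠ psupp s') :
    ∑ i, (w i : ℂ) • (C i (pauliString s) ⊗ₖ C i (pauliString s')) = 0 := by
  obtain ⟨m, v, W, -, -, hW, hv, htwirl⟩ := hLU
  rw [htwirl]
  refine Finset.sum_eq_zero fun i _ => ?_
  simp_rw [Complex.ofReal_mul, mul_smul, ← Finset.smul_sum]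
  let β := (kroneckerBilinear (R := ℂ)).compl₁₂ (C i) (C i)
  refine (congrArg _ ?_).trans (smul_zero _)
  obtain ⟨k, ⟨hs, hs'⟩ | ⟨hs', hs⟩⟩ := exists_xor_eq_zero_of_psupp_ne h
  · exact sum_prod_smul_conj_pauliString_eq_zero β v W hW hv hs hs'
  · exact sum_prod_smul_conj_pauliString_eq_zero β.flip v W hW hv hs' hs

theorem stmt_8_general (n : ℕ) {ι : Type*} [Fintype ι] (w : ι → ℝ)
    (C : ι → NMat n → NMat n)
    (hlin : ∀ i, IsLinearMap ℂ (C i))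
    (hLU : LocallyUnbiased n w C) :
    (∀ s s' : Fin n → Fin 4, psupp s ≠ psupp s' →
        ∑ i, (w i : ℂ) • (C i (pauliString s) ⊗ₖ C i (pauliString s')) = 0) ∧
    (∀ a : (Fin n → Fin 4) → ℝ,
        ∑ i, (w i : ℂ) • (C i (obsOf a) ⊗ₖ C i (obsOf a)) =
          ∑ A : Finset (Fin n), ∑ i, (w i : ℂ) •
            ((∑ s ∈ Finset.univ.filter fun s : Fin n → Fin 4 => psupp s = A,
                (a s : ℂ) • C i (pauliString s)) ⊗ₖ
              (∑ s ∈ Finset.univ.filter fun s : Fin n → Fin 4 => psupp s = A,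
                (a s : ℂ) • C i (pauliString s)))) := by
  obtain ⟨L, rfl⟩ : ∃ L : ι → NMat n →ₗ[ℂ] NMat n, (fun i => ⇑(L i)) = C :=
    ⟨fun i => (hlin i).mk', rfl⟩
  have horth : ∀ s s' : Fin n → Fin 4, psupp s ≠ psupp s' →
      ∑ i, (w i : ℂ) • (L i (pauliString s) ⊗ₖ L i (pauliString s')) = 0 :=
    fun _ _ => hLU.sum_smul_kronecker_pauliString_eq_zero
  refine ⟨horth, fun a => ?_⟩
  let B := ∑ i, (w i : ℂ) • (kroneckerBilinear (R := ℂ)).compl₁₂ (L i) (L i)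
  have hB : ∀ X Y, B X Y = ∑ i, (w i : ℂ) • (L i X ⊗ₖ L i Y) := fun X Y => by
    simp only [B, LinearMap.coe_sum, Finset.sum_apply, LinearMap.smul_apply,
      LinearMap.compl₁₂_apply]
    rfl
  have hsplit := B.map_sum_sum_eq_sum_fiberwise (fun s => (a s : ℂ) • pauliString s) psupp
    fun s t h => by simp only [map_smul, LinearMap.smul_apply, hB, horth s t h, smul_zero]
  rw [show obsOf a = ∑ s, (a s : ℂ) • pauliString s from rfl, ← hB, hsplit]
  refine sum_congr rfl fun A _ => ?_
  rw [hB]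
  simp only [map_sum, map_smul]

/-- (Orthogonality for locally unbiased distributions.) If `D` is
locally unbiased then `E_C[C(P) ⊗ C(Q)] = 0` whenever `supp(P) ≠ supp(Q)`; consequently
the two-fold twirl of any observable splits as a sum over supports. -/
theorem stmt_8 (n : ℕ) {ι : Type*} [Fintype ι] (w : ι → ℝ)
    (C : ι → NMat n → NMat n)
    (hw0 : ∀ i, 0 ≤ w i) (hw1 : ∑ i, w i = 1)
    (hlin : ∀ i, IsLinearMap ℂ (C i))
    (hLU : LocallyUnbiased n w C) :
    (∀ s s' : Fin n → Fin 4, psupp s ≠ psupp s' →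
        ∑ i, (w i : ℂ) • (C i (pauliString s) ⊗ₖ C i (pauliString s')) = 0) ∧
    (∀ a : (Fin n → Fin 4) → ℝ,
        ∑ i, (w i : ℂ) • (C i (obsOf a) ⊗ₖ C i (obsOf a)) =
          ∑ A : Finset (Fin n), ∑ i, (w i : ℂ) •
            ((∑ s ∈ Finset.univ.filter fun s : Fin n → Fin 4 => psupp s = A,
                (a s : ℂ) • C i (pauliString s)) ⊗ₖ
              (∑ s ∈ Finset.univ.filter fun s : Fin n → Fin 4 => psupp s = A,
                (a s : ℂ) • C i (pauliString s)))) :=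
  stmt_8_general n w C hlin hLU
end
end

section
/- Let O be a Hermitian 2^n×2^n matrix, let c > 0, and let D be a probability distribution over density matrices (positive semidefinite 2^n×2^n matrices with trace 1) such that the operator norm of the average state satisfies ‖E_{ρ∼D}[ρ]‖_∞ ≤ c/2^n. Then E_{ρ∼D} (Tr[O ρ])² ≤ c · ‖O‖_F². -/
open scoped Kronecker
open Matrix
open scoped ComplexOrder

noncomputable section

/-! For a state `ρ`, Cauchy–Schwarz for the semi-inner product `⟪X, Y⟫ = Tr[Y ρ Xᴴ]` gives
`|Tr[O ρ]|² ≤ Tr[O ρ Oᴴ]`. Averaging over the ensemble turns the right-hand side into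
`Tr[O ρ̄ Oᴴ]` for the average state `ρ̄`, and `ρ̄ ≤ ‖ρ̄‖ • 1` in the Loewner order bounds it by
`‖ρ̄‖ Tr[O Oᴴ] ≤ (c / 2^n) · 2^n ‖O‖_F²`. -/

open scoped Matrix.Norms.L2Operator MatrixOrder

section
variable {m : Type*} [Fintype m]

lemma sum_normSq_eq_norm_sq (v : m → ℂ) :
    ∑ x, Complex.normSq (v x) = ‖WithLp.toLp 2 v‖ ^ 2 := by
  simp [EuclideanSpace.norm_sq_eq, Complex.normSq_eq_norm_sq]

variable [DecidableEq m]

lemma specNorm_eq_l2_opNorm (M : Matrix m m ℂ) : specNorm M = ‖M‖ := by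
  set S := { r : ℝ | ∃ v : m → ℂ,
    (∑ x, Complex.normSq (v x)) = 1 ∧ r = ∑ x, Complex.normSq ((M *ᵥ v) x) }
  have hS : ∀ r ∈ S, r ≤ ‖M‖ ^ 2 := by
    rintro r ⟨v, hv, rfl⟩
    rw [sum_normSq_eq_norm_sq, pow_eq_one_iff_of_nonneg (norm_nonneg _) two_ne_zero] at hv
    rw [sum_normSq_eq_norm_sq]
    have hMv := M.l2_opNorm_mulVec (WithLp.toLp 2 v)
    rw [hv, mul_one] at hMv
    exact pow_le_pow_left₀ (norm_nonneg _) hMv 2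
  refine le_antisymm ?_ ?_
  · calc specNorm M ≤ Real.sqrt (‖M‖ ^ 2) :=
          Real.sqrt_le_sqrt (Real.sSup_le hS (by positivity))
      _ = ‖M‖ := Real.sqrt_sq (norm_nonneg M)
  · refine ContinuousLinearMap.opNorm_le_of_unit_norm (Real.sqrt_nonneg _) fun x hx => ?_
    refine Real.le_sqrt_of_sq_le (le_csSup ⟨_, hS⟩ ⟨x.ofLp, ?_, ?_⟩)
    · simp [sum_normSq_eq_norm_sq, hx]
    · rw [sum_normSq_eq_norm_sq]; rfl

lemma norm_trace_mul_sq_le (A ρ : Matrix m m ℂ) (hρ : ρ.PosSemidef) :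
    ‖(A * ρ).trace‖ ^ 2 ≤ ρ.trace.re * (A * ρ * Aᴴ).trace.re := by
  let _ := ρ.toMatrixSeminormedAddCommGroup hρ
  let _ := ρ.toMatrixInnerProductSpace hρ
  have hcs := norm_inner_le_norm (𝕜 := ℂ) (1 : Matrix m m ℂ) A
  have hone := norm_sq_eq_re_inner (𝕜 := ℂ) (1 : Matrix m m ℂ)
  have hA := norm_sq_eq_re_inner (𝕜 := ℂ) A
  change ‖(A * ρ * 1ᴴ).trace‖ ≤ _ at hcs
  change _ = RCLike.re (1 * ρ * 1ᴴ).trace at hone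
  change _ = RCLike.re (A * ρ * Aᴴ).trace at hA
  simp only [conjTranspose_one, mul_one, one_mul, RCLike.re_to_complex] at hcs hone hA
  rw [← hone, ← hA, ← mul_pow]
  exact pow_le_pow_left₀ (norm_nonneg _) hcs 2

lemma re_trace_mul_mul_conjTranspose_le (σ A : Matrix m m ℂ) (hσ : σ.IsHermitian) :
    (A * σ * Aᴴ).trace.re ≤ ‖σ‖ * (A * Aᴴ).trace.re := by
  have hle : A * σ * Aᴴ ≤ A * algebraMap ℝ _ ‖σ‖ * Aᴴ :=
    star_right_conjugate_le_conjugate (IsSelfAdjoint.le_algebraMap_norm_self hσ) A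
  have hgap := (Matrix.nonneg_iff_posSemidef.mp (sub_nonneg.mpr hle)).trace_nonneg
  rw [Matrix.trace_sub, sub_nonneg] at hgap
  calc (A * σ * Aᴴ).trace.re ≤ (A * algebraMap ℝ _ ‖σ‖ * Aᴴ).trace.re :=
        (Complex.le_def.mp hgap).1
    _ = ‖σ‖ * (A * Aᴴ).trace.re := by
      rw [Algebra.algebraMap_eq_smul_one, mul_smul_comm, mul_one, smul_mul_assoc, trace_smul,
        Complex.real_smul, Complex.re_ofReal_mul]

lemma sum_mul_norm_trace_mul_sq_le {ι : Type*} [Fintype ι] (w : ι → ℝ) (hw : ∀ i, 0 ≤ w i)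
    (ρ : ι → Matrix m m ℂ) (hρ : ∀ i, (ρ i).PosSemidef) (hρ1 : ∀ i, (ρ i).trace = 1)
    (A : Matrix m m ℂ) :
    ∑ i, w i * ‖(A * ρ i).trace‖ ^ 2 ≤ ‖∑ i, (w i : ℂ) • ρ i‖ * (A * Aᴴ).trace.re := by
  have havg : (∑ i, (w i : ℂ) • ρ i).PosSemidef :=
    Matrix.posSemidef_sum _ fun i _ => (hρ i).smul (by exact_mod_cast hw i)
  have hlin : (A * (∑ i, (w i : ℂ) • ρ i) * Aᴴ).trace.re =
      ∑ i, w i * (A * ρ i * Aᴴ).trace.re := by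
    simp only [Finset.mul_sum, Finset.sum_mul, mul_smul_comm, smul_mul_assoc, trace_sum,
      trace_smul, Complex.re_sum, smul_eq_mul, Complex.re_ofReal_mul]
  calc ∑ i, w i * ‖(A * ρ i).trace‖ ^ 2 ≤ ∑ i, w i * (A * ρ i * Aᴴ).trace.re := by
        gcongr with i
        · exact hw i
        · simpa [hρ1 i] using norm_trace_mul_sq_le A (ρ i) (hρ i)
    _ ≤ ‖∑ i, (w i : ℂ) • ρ i‖ * (A * Aᴴ).trace.re := by
        rw [← hlin]; exact re_trace_mul_mul_conjTranspose_le _ A havg.isHermitian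

end

theorem stmt_19_general (n : ℕ) {ι : Type*} [Fintype ι] (w : ι → ℝ)
    (hw0 : ∀ i, 0 ≤ w i)
    (ρ : ι → NMat n) (hρ : ∀ i, (ρ i).PosSemidef) (hρ1 : ∀ i, Matrix.trace (ρ i) = 1)
    (c : ℝ)
    (O : NMat n)
    (havg : specNorm (∑ i, (w i : ℂ) • ρ i) ≤ c / 2 ^ n) :
    ∑ i, w i * ‖Matrix.trace (O * ρ i)‖ ^ 2 ≤ c * frobSq O := by
  have htr : 0 ≤ (O * Oᴴ).trace.re :=
    (Complex.le_def.mp (Matrix.posSemidef_self_mul_conjTranspose O).trace_nonneg).1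
  have hfrob : frobSq O = (O * Oᴴ).trace.re / 2 ^ n := by
    simp [frobSq, Matrix.trace_mul_comm Oᴴ O]
  calc ∑ i, w i * ‖(O * ρ i).trace‖ ^ 2 ≤ ‖∑ i, (w i : ℂ) • ρ i‖ * (O * Oᴴ).trace.re :=
        sum_mul_norm_trace_mul_sq_le w hw0 ρ hρ hρ1 O
    _ ≤ c / 2 ^ n * (O * Oᴴ).trace.re := by
        rw [← specNorm_eq_l2_opNorm]; gcongr
    _ = c * frobSq O := by rw [hfrob]; ring

/-- (Second moments for low-average ensembles.) If the average state of
an ensemble of density matrices has operator norm at most `c/2^n`, then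
`E_ρ (Tr[O ρ])² ≤ c·‖O‖_F²` for every Hermitian observable `O`. -/
theorem stmt_19 (n : ℕ) {ι : Type*} [Fintype ι] (w : ι → ℝ)
    (hw0 : ∀ i, 0 ≤ w i) (hw1 : ∑ i, w i = 1)
    (ρ : ι → NMat n) (hρ : ∀ i, (ρ i).PosSemidef) (hρ1 : ∀ i, Matrix.trace (ρ i) = 1)
    (c : ℝ) (hc : 0 < c)
    (O : NMat n) (hO : O.IsHermitian)
    (havg : specNorm (∑ i, (w i : ℂ) • ρ i) ≤ c / 2 ^ n) :
    ∑ i, w i * ‖Matrix.trace (O * ρ i)‖ ^ 2 ≤ c * frobSq O :=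
  stmt_19_general n w hw0 ρ hρ hρ1 c O havg

end
end
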